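/- Let h, f_S, f_T : X → ℝ be measurable functions taking values in [0,1], let μ_S and μ_T be probability measures on X possessing densities φ_S and φ_T with respect to a common σ-finite measure ν, and define ε_μ(g, f) = ∫ |g(x) − f(x)| dμ(x), ε_S(h) = ε_{μ_S}(h, f_S), ε_T(h) = ε_{μ_T}(h, f_T), and d(D_S, D_T) = ∫ |φ_S(x) − φ_T(x)| dν(x). Then ε_T(h) ≤ ε_S(h) + ∫ |f_S(x) − f_T(x)| dμ_S(x) + d(D_S, D_T). -/
import Mathlib


open MeasureTheory

lemma density_integrable' {X : Type*} [MeasurableSpace X]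
    (ν : Measure X) (φ : X → ℝ) (hφ : Measurable φ) (hφ0 : ∀ x, 0 ≤ φ x)
    (μ : Measure X) [IsProbabilityMeasure μ]
    (hμ : μ = ν.withDensity (fun x => ENNReal.ofReal (φ x))) :
    Integrable φ ν := by
  have h1 : ∫⁻ x, ENNReal.ofReal (φ x) ∂ν = 1 := by
    have := measure_univ (μ := μ)
    rwa [hμ, withDensity_apply _ MeasurableSet.univ, setLIntegral_univ] at this
  have h2 : Integrable (fun x => (ENNReal.ofReal (φ x)).toReal) ν :=
    MeasureTheory.integrable_toReal_of_lintegral_ne_top hφ.ennreal_ofReal.aemeasurable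
      (by simp [h1])
  have : (fun x => (ENNReal.ofReal (φ x)).toReal) = φ := by
    funext x; exact ENNReal.toReal_ofReal (hφ0 x)
  rwa [this] at h2

lemma integral_density_eq {X : Type*} [MeasurableSpace X]
    (ν : Measure X) (φ : X → ℝ) (hφ : Measurable φ) (hφ0 : ∀ x, 0 ≤ φ x)
    (g : X → ℝ) :
    ∫ x, g x ∂(ν.withDensity (fun x => ENNReal.ofReal (φ x)))
      = ∫ x, g x * φ x ∂ν := by
  have hd : (fun x => ENNReal.ofReal (φ x))
      = (fun x => (Real.toNNReal (φ x) : ENNReal)) := rfl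
  rw [hd, integral_withDensity_eq_integral_smul hφ.real_toNNReal]
  congr 1; funext x
  simp [NNReal.smul_def, Real.coe_toNNReal _ (hφ0 x), mul_comm]

/-- First one-sided bound in the proof of Theorem 1 (labeling discrepancy
integrated over the source domain). -/
theorem target_error_bound_source_side
    {X : Type*} [MeasurableSpace X]
    (ν : Measure X) [SigmaFinite ν]
    (φS φT : X → ℝ) (hφS : Measurable φS) (hφT : Measurable φT)
    (hφS0 : ∀ x, 0 ≤ φS x) (hφT0 : ∀ x, 0 ≤ φT x)
    (μS μT : Measure X)
    [IsProbabilityMeasure μS] [IsProbabilityMeasure μT]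
    (hμS : μS = ν.withDensity (fun x => ENNReal.ofReal (φS x)))
    (hμT : μT = ν.withDensity (fun x => ENNReal.ofReal (φT x)))
    (h fS fT : X → ℝ)
    (hh : Measurable h) (hfS : Measurable fS) (hfT : Measurable fT)
    (hh01 : ∀ x, h x ∈ Set.Icc (0 : ℝ) 1)
    (hfS01 : ∀ x, fS x ∈ Set.Icc (0 : ℝ) 1)
    (hfT01 : ∀ x, fT x ∈ Set.Icc (0 : ℝ) 1) :
    (∫ x, |h x - fT x| ∂μT) ≤
      (∫ x, |h x - fS x| ∂μS)
      + (∫ x, |fS x - fT x| ∂μS)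
      + (∫ x, |φS x - φT x| ∂ν) := by
  have hφSint : Integrable φS ν := density_integrable' ν φS hφS hφS0 μS hμS
  have hφTint : Integrable φT ν := density_integrable' ν φT hφT hφT0 μT hμT
  -- rewrite the three withDensity integrals
  rw [hμT, integral_density_eq ν φT hφT hφT0,
      hμS, integral_density_eq ν φS hφS hφS0,
      integral_density_eq ν φS hφS hφS0]
  -- integrability of the pieces
  have habs : ∀ (u v : X → ℝ), Measurable u → Measurable v →
      (∀ x, |u x - v x| ≤ 1) → ∀ (φ : X → ℝ), Measurable φ → (∀ x, 0 ≤ φ x) →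
      Integrable φ ν → Integrable (fun x => |u x - v x| * φ x) ν := by
    intro u v hu hv hb φ hφ hφ0 hφi
    refine hφi.mono ((hu.sub hv).abs.mul hφ).aestronglyMeasurable
      (ae_of_all _ fun x => ?_)
    simp only [Real.norm_eq_abs]
    rw [abs_of_nonneg (mul_nonneg (abs_nonneg _) (hφ0 x)), abs_of_nonneg (hφ0 x)]
    calc |u x - v x| * φ x ≤ 1 * φ x := by
          exact mul_le_mul_of_nonneg_right (hb x) (hφ0 x)
      _ = φ x := one_mul _
  have bnd : ∀ (u v : X → ℝ), (∀ x, u x ∈ Set.Icc (0:ℝ) 1) →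
      (∀ x, v x ∈ Set.Icc (0:ℝ) 1) → ∀ x, |u x - v x| ≤ 1 := by
    intro u v hu hv x
    rw [abs_sub_le_iff]
    constructor <;> linarith [(hu x).1, (hu x).2, (hv x).1, (hv x).2]
  have i1 := habs h fT hh hfT (bnd h fT hh01 hfT01) φT hφT hφT0 hφTint
  have i2 := habs h fS hh hfS (bnd h fS hh01 hfS01) φS hφS hφS0 hφSint
  have i3 := habs fS fT hfS hfT (bnd fS fT hfS01 hfT01) φS hφS hφS0 hφSint
  have i4 : Integrable (fun x => |φS x - φT x|) ν := (hφSint.sub hφTint).abs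
  calc (∫ x, |h x - fT x| * φT x ∂ν)
      ≤ ∫ x, (|h x - fS x| * φS x + |fS x - fT x| * φS x + |φS x - φT x|) ∂ν := by
        refine integral_mono i1 ((i2.add i3).add i4) fun x => ?_
        have h1 : |h x - fT x| ≤ |h x - fS x| + |fS x - fT x| := by
          calc |h x - fT x| = |(h x - fS x) + (fS x - fT x)| := by ring_nf
            _ ≤ _ := abs_add_le _ _
        have h2 : |h x - fT x| * φT x ≤ |h x - fT x| * φS x + |φS x - φT x| := by
          have : |h x - fT x| * (φT x - φS x) ≤ |φS x - φT x| := by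
            calc |h x - fT x| * (φT x - φS x) ≤ |h x - fT x| * |φT x - φS x| :=
                  mul_le_mul_of_nonneg_left (le_abs_self _) (abs_nonneg _)
              _ ≤ 1 * |φT x - φS x| :=
                  mul_le_mul_of_nonneg_right (bnd h fT hh01 hfT01 x) (abs_nonneg _)
              _ = |φS x - φT x| := by rw [one_mul, abs_sub_comm]
          linarith
        have h3 : |h x - fT x| * φS x ≤ (|h x - fS x| + |fS x - fT x|) * φS x :=
          mul_le_mul_of_nonneg_right h1 (hφS0 x)
        nlinarith [h2, h3]
    _ = (∫ x, |h x - fS x| * φS x ∂ν) + (∫ x, |fS x - fT x| * φS x ∂ν)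
        + (∫ x, |φS x - φT x| ∂ν) := by
        have e1 : ∫ x, (|h x - fS x| * φS x + |fS x - fT x| * φS x + |φS x - φT x|) ∂ν
            = (∫ x, (|h x - fS x| * φS x + |fS x - fT x| * φS x) ∂ν)
              + ∫ x, |φS x - φT x| ∂ν := integral_add (i2.add i3) i4
        have e2 : ∫ x, (|h x - fS x| * φS x + |fS x - fT x| * φS x) ∂ν
            = (∫ x, |h x - fS x| * φS x ∂ν) + ∫ x, |fS x - fT x| * φS x ∂ν :=
          integral_add i2 i3
        rw [e1, e2]
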